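/- Let A ∈ ℝ^{n×n}, B ∈ ℝ^{n×p}, and t₁ > 0. The reachable set of the system ẋ = Ax + Bu from x(0) = 0 at time t₁, namely { ∫₀^{t₁} exp(A(t₁−s))·B·u(s) ds : u : [0, t₁] → ℝ^p continuous }, equals the column space of the controllability matrix 𝒞 of (A, B), which also equals the column space of the controllability Gramian W_c(t₁). -/

import Mathlib

open Matrix intervalIntegral
/-- Controllability matrix of the pair `(A, B)`: the horizontal block concatenation of
`B, A*B, A²*B, …, A^(n-1)*B`, indexed so that entry `(i, (k, j))` is `(A^k * B) i j`. -/
noncomputable def ctrbMat {n p : ℕ} (A : Matrix (Fin n) (Fin n) ℝ)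
    (B : Matrix (Fin n) (Fin p) ℝ) : Matrix (Fin n) (Fin n × Fin p) ℝ :=
  fun i kj => (A ^ (kj.1 : ℕ) * B) i kj.2

/-- Controllability Gramian `W_c(t₁) = ∫₀^{t₁} exp(As) B Bᵀ exp(Aᵀs) ds` (entrywise integral). -/
noncomputable def ctrbGram {n p : ℕ} (A : Matrix (Fin n) (Fin n) ℝ)
    (B : Matrix (Fin n) (Fin p) ℝ) (t₁ : ℝ) : Matrix (Fin n) (Fin n) ℝ :=
  fun i j => ∫ s in (0:ℝ)..t₁,
    (NormedSpace.exp (s • A) * B * Bᵀ * NormedSpace.exp (s • Aᵀ)) i j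

/-!
Everything is compared through annihilating row vectors `w`. Cayley–Hamilton puts `e^{sA}` in
the span of `A^0, …, A^{n-1}`, so `w 𝒞 = 0` forces `w e^{sA} B = 0` for every `s`; conversely,
differentiating `s ↦ w e^{sA} B` at `0` recovers `w A^k B`, so vanishing on `[0, t₁]` already
forces `w 𝒞 = 0`. Since `wᵀ W_c(t₁) w = ∫₀^{t₁} |w e^{sA} B|²`, the left kernel of `W_c(t₁)`
is contained in that of `𝒞`. Hence reachable set ⊆ col 𝒞 ⊆ col W_c(t₁), and `W_c(t₁) w` is
reached by the control `u(s) = Bᵀ e^{(t₁-s)Aᵀ} w`.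
-/

open NormedSpace Polynomial Set Filter Topology

namespace Matrix

theorem exists_mulVec_eq_of_forall_vecMul_eq_zero {K m ι : Type*} [Field K] [Fintype m]
    [Fintype ι] {M : Matrix m ι K} {x : m → K} (h : ∀ w, w ᵥ* M = 0 → w ⬝ᵥ x = 0) :
    ∃ v, M *ᵥ v = x := by
  classical
  by_contra hx
  obtain ⟨f, hfx, hf⟩ := Submodule.exists_le_ker_of_notMem (p := LinearMap.range M.mulVecLin)
    (v := x) (by simpa using hx)
  set w : m → K := fun i => f (Pi.single i 1)
  have hfw : ∀ y, f y = w ⬝ᵥ y := fun y => by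
    conv_lhs => rw [pi_eq_sum_univ' y]
    simp [dotProduct, w, mul_comm]
  refine hfx ((hfw x).trans (h w ?_))
  ext j
  have := hf (LinearMap.mem_range_self M.mulVecLin (Pi.single j 1))
  rwa [LinearMap.mem_ker, hfw, mulVecLin_apply, dotProduct_mulVec, dotProduct_single,
    mul_one] at this

theorem toSubmodule_adjoin_le_span_pow {R ι : Type*} [CommRing R] [Nontrivial R] [Fintype ι]
    [DecidableEq ι] (A : Matrix ι ι R) :
    Subalgebra.toSubmodule (Algebra.adjoin R {A}) ≤
      Submodule.span R ((A ^ ·) '' Iio (Fintype.card ι)) := by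
  intro M hM
  rw [Subalgebra.mem_toSubmodule, Algebra.adjoin_singleton_eq_range_aeval] at hM
  obtain ⟨p, rfl⟩ := hM
  change aeval A p ∈ _
  rcases isEmpty_or_nonempty ι with _ | _
  · rw [Subsingleton.elim (aeval A p) 0]
    exact Submodule.zero_mem _
  have hne : A.charpoly ≠ 1 := fun h =>
    (Fintype.card_pos (α := ι)).ne' (by simpa [h] using A.charpoly_natDegree_eq_dim.symm)
  have hdeg : (p %ₘ A.charpoly).natDegree < Fintype.card ι := by
    simpa using natDegree_modByMonic_lt p A.charpoly_monic hne
  rw [← aeval_modByMonic_eq_self_of_root A.aeval_self_charpoly, aeval_eq_sum_range' hdeg]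
  exact Submodule.sum_mem _ fun i hi =>
    Submodule.smul_mem _ _ (Submodule.subset_span ⟨i, Finset.mem_range.1 hi, rfl⟩)

theorem exp_smul_mem_adjoin {𝕂 ι : Type*} [RCLike 𝕂] [Fintype ι] [DecidableEq ι]
    (A : Matrix ι ι 𝕂) (s : 𝕂) : exp (s • A) ∈ Algebra.adjoin 𝕂 {A} :=
  exp_mem (R := 𝕂) (S := Subalgebra 𝕂 (Matrix ι ι 𝕂))
    (Subalgebra.toSubmodule (Algebra.adjoin 𝕂 {A})).closed_of_finiteDimensional
    (Subalgebra.smul_mem _ (Algebra.self_mem_adjoin_singleton 𝕂 A) s)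

section Derivative

-- Any norm will do: the operator norm induces the product topology used in the statements.
attribute [local instance] Matrix.linftyOpNormedRing Matrix.linftyOpNormedAlgebra

variable {𝕂 ι κ : Type*} [RCLike 𝕂] [Fintype ι] [DecidableEq ι]

theorem continuous_exp_smul (A : Matrix ι ι 𝕂) : Continuous fun s : 𝕂 => exp (s • A) :=
  exp_continuous.comp (continuous_id.smul continuous_const)

theorem continuous_exp_smul_mul (A : Matrix ι ι 𝕂) (B : Matrix ι κ 𝕂) :
    Continuous fun s : 𝕂 => exp (s • A) * B :=
  (continuous_exp_smul A).matrix_mul continuous_const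

theorem hasDerivAt_vecMul_exp_smul_mul [Fintype κ] (v : ι → 𝕂) (A : Matrix ι ι 𝕂)
    (B : Matrix ι κ 𝕂) (t : 𝕂) :
    HasDerivAt (fun s : 𝕂 => v ᵥ* (exp (s • A) * B)) ((v ᵥ* A) ᵥ* (exp (t • A) * B)) t := by
  let L : Matrix ι ι 𝕂 →ₗ[𝕂] κ → 𝕂 := (vecMulBilin 𝕂 𝕂 v).comp (mulRightLinearMap ι 𝕂 B)
  refine (L.toContinuousLinearMap.hasFDerivAt.comp_hasDerivAt t
    (hasDerivAt_exp_smul_const' A t)).congr_deriv ?_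
  change v ᵥ* (A * exp (t • A) * B) = _
  rw [Matrix.mul_assoc, vecMul_vecMul]

end Derivative
end Matrix

theorem dotProduct_intervalIntegral {𝕜 m : Type*} [RCLike 𝕜] [Fintype m]
    {μ : MeasureTheory.Measure ℝ} {a b : ℝ} {f : ℝ → m → 𝕜}
    (hf : ∀ i, IntervalIntegrable (fun s => f s i) μ a b) (w : m → 𝕜) :
    w ⬝ᵥ (fun i => ∫ s in a..b, f s i ∂μ) = ∫ s in a..b, w ⬝ᵥ f s ∂μ := by
  simp only [dotProduct, ← integral_const_mul]
  rw [integral_finsetSum fun i _ => (hf i).const_mul (w i)]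

section Controllability

variable {n p : ℕ} (A : Matrix (Fin n) (Fin n) ℝ) (B : Matrix (Fin n) (Fin p) ℝ)

noncomputable def finalState (t₁ : ℝ) (u : ℝ → Fin p → ℝ) : Fin n → ℝ :=
  fun i => ∫ s in (0:ℝ)..t₁, (exp ((t₁ - s) • A) * B).mulVec (u s) i

theorem vecMul_ctrbMat_eq_zero_iff {w : Fin n → ℝ} :
    w ᵥ* ctrbMat A B = 0 ↔ ∀ k < n, w ᵥ* (A ^ k * B) = 0 := by
  constructor
  · intro h k hk
    ext j
    exact congrFun h (⟨k, hk⟩, j)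
  · intro h
    ext ⟨k, j⟩
    exact congrFun (h k k.2) j

theorem vecMul_exp_smul_mul_eq_zero {w : Fin n → ℝ} (hw : w ᵥ* ctrbMat A B = 0) (s : ℝ) :
    w ᵥ* (exp (s • A) * B) = 0 := by
  have hspan : Submodule.span ℝ ((A ^ ·) '' Iio n) ≤
      LinearMap.ker ((vecMulBilin ℝ ℝ w).comp (mulRightLinearMap (Fin n) ℝ B)) := by
    rw [Submodule.span_le]
    rintro _ ⟨k, hk, rfl⟩
    exact (vecMul_ctrbMat_eq_zero_iff A B).1 hw k hk
  simpa using hspan (by simpa using toSubmodule_adjoin_le_span_pow A (exp_smul_mem_adjoin A s))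

theorem vecMul_ctrbMat_eq_zero_of_forall_mem_Ioo {t : ℝ} (ht : 0 < t) {w : Fin n → ℝ}
    (hw : ∀ s ∈ Ioo 0 t, w ᵥ* (exp (s • A) * B) = 0) : w ᵥ* ctrbMat A B = 0 := by
  have hpow : ∀ k, ∀ s ∈ Ioo 0 t, (w ᵥ* A ^ k) ᵥ* (exp (s • A) * B) = 0 := by
    intro k
    induction k with
    | zero => simpa using hw
    | succ k ih =>
      intro s hs
      have hloc : (fun r : ℝ => (w ᵥ* A ^ k) ᵥ* (exp (r • A) * B)) =ᶠ[𝓝 s] fun _ => 0 :=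
        eventually_of_mem (Ioo_mem_nhds hs.1 hs.2) ih
      rw [pow_succ, ← vecMul_vecMul w (A ^ k) A]
      exact (hasDerivAt_vecMul_exp_smul_mul _ A B s).unique
        ((hasDerivAt_const s 0).congr_of_eventuallyEq hloc)
  refine (vecMul_ctrbMat_eq_zero_iff A B).2 fun k _ => ?_
  have h0 : (0 : ℝ) ∈ closure (Ioo 0 t) := by
    rw [closure_Ioo ht.ne]
    exact ⟨le_rfl, ht.le⟩
  simpa [vecMul_vecMul] using EqOn.closure (hpow k)
    (continuous_const.matrix_vecMul (continuous_exp_smul_mul A B)) continuous_const h0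

theorem ctrbGram_integrand_mulVec (s : ℝ) (w : Fin n → ℝ) :
    (exp (s • A) * B * Bᵀ * exp (s • Aᵀ)) *ᵥ w =
      (exp (s • A) * B) *ᵥ (w ᵥ* (exp (s • A) * B)) := by
  rw [← transpose_smul, exp_transpose, Matrix.mul_assoc, ← transpose_mul, ← mulVec_mulVec,
    mulVec_transpose]

theorem ctrbGram_mulVec (t₁ : ℝ) (w : Fin n → ℝ) :
    ctrbGram A B t₁ *ᵥ w =
      fun i => ∫ s in (0:ℝ)..t₁, ((exp (s • A) * B) *ᵥ (w ᵥ* (exp (s • A) * B))) i := by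
  have hE : Continuous fun s : ℝ => exp (s • A) * B * Bᵀ * exp (s • Aᵀ) :=
    ((continuous_exp_smul_mul A B).matrix_mul continuous_const).matrix_mul
      (continuous_exp_smul Aᵀ)
  ext i
  rw [mulVec, dotProduct_comm]
  change w ⬝ᵥ (fun j => ∫ s in (0:ℝ)..t₁, (exp (s • A) * B * Bᵀ * exp (s • Aᵀ)) i j) = _
  rw [dotProduct_intervalIntegral fun j => (hE.matrix_elem i j).intervalIntegrable 0 t₁]
  refine integral_congr fun s _ => ?_
  rw [← ctrbGram_integrand_mulVec]
  exact dotProduct_comm _ _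

theorem dotProduct_ctrbGram_mulVec (t₁ : ℝ) (w : Fin n → ℝ) :
    w ⬝ᵥ ctrbGram A B t₁ *ᵥ w =
      ∫ s in (0:ℝ)..t₁, (w ᵥ* (exp (s • A) * B)) ⬝ᵥ (w ᵥ* (exp (s • A) * B)) := by
  have hm := continuous_exp_smul_mul A B
  rw [ctrbGram_mulVec, dotProduct_intervalIntegral fun i => (continuous_pi_iff.1
    (hm.matrix_mulVec (continuous_const.matrix_vecMul hm)) i).intervalIntegrable 0 t₁]
  simp only [dotProduct_mulVec]

theorem vecMul_ctrbMat_eq_zero_of_vecMul_ctrbGram_eq_zero {t₁ : ℝ} (ht₁ : 0 < t₁)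
    {w : Fin n → ℝ} (hw : w ᵥ* ctrbGram A B t₁ = 0) : w ᵥ* ctrbMat A B = 0 := by
  set η := fun s : ℝ => w ᵥ* (exp (s • A) * B)
  have hη : Continuous η := continuous_const.matrix_vecMul (continuous_exp_smul_mul A B)
  have hint : ∫ s in (0:ℝ)..t₁, η s ⬝ᵥ η s = 0 := by
    rw [← dotProduct_ctrbGram_mulVec, dotProduct_mulVec, hw, zero_dotProduct]
  refine vecMul_ctrbMat_eq_zero_of_forall_mem_Ioo A B ht₁ fun s hs => ?_
  by_contra hne
  have hsq_nonneg : ∀ r, 0 ≤ η r ⬝ᵥ η r := fun r => by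
    simpa using dotProduct_star_self_nonneg (η r)
  refine (integral_pos ht₁ (hη.dotProduct hη).continuousOn (fun r _ => hsq_nonneg r)
    ⟨s, Ioo_subset_Icc_self hs, ?_⟩).ne' hint
  exact (hsq_nonneg s).lt_of_ne (Ne.symm (dotProduct_self_eq_zero.not.2 hne))

theorem dotProduct_finalState {t₁ : ℝ} {u : ℝ → Fin p → ℝ} (hu : Continuous u)
    (w : Fin n → ℝ) :
    w ⬝ᵥ finalState A B t₁ u = ∫ s in (0:ℝ)..t₁, (w ᵥ* (exp ((t₁ - s) • A) * B)) ⬝ᵥ u s := by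
  have hm : Continuous fun s : ℝ => exp ((t₁ - s) • A) * B :=
    (continuous_exp_smul_mul A B).comp (continuous_sub_left t₁)
  unfold finalState
  rw [dotProduct_intervalIntegral fun i =>
    (continuous_pi_iff.1 (hm.matrix_mulVec hu) i).intervalIntegrable 0 t₁]
  simp only [dotProduct_mulVec]

theorem ctrbGram_mulVec_eq_finalState (t₁ : ℝ) (w : Fin n → ℝ) :
    ctrbGram A B t₁ *ᵥ w = finalState A B t₁ fun s => w ᵥ* (exp ((t₁ - s) • A) * B) := by
  rw [ctrbGram_mulVec]
  ext i
  simpa [finalState] using (integral_comp_sub_left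
    (fun s => ((exp (s • A) * B) *ᵥ (w ᵥ* (exp (s • A) * B))) i) t₁ (a := 0) (b := t₁)).symm

end Controllability

/-- The reachable set of `ẋ = Ax + Bu` from `x(0) = 0` at time `t₁ > 0` (over
continuous controls) equals the column space of the controllability matrix `𝒞`,
which also equals the column space of the controllability Gramian `W_c(t₁)`. -/
theorem reachable_set_eq_ctrb_columnspace {n p : ℕ}
    (A : Matrix (Fin n) (Fin n) ℝ) (B : Matrix (Fin n) (Fin p) ℝ)
    (t₁ : ℝ) (ht₁ : 0 < t₁) :
    ({ x : Fin n → ℝ | ∃ u : ℝ → Fin p → ℝ, Continuous u ∧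
        x = fun i => ∫ s in (0:ℝ)..t₁,
          (NormedSpace.exp ((t₁ - s) • A) * B).mulVec (u s) i } =
      { y : Fin n → ℝ | ∃ v : Fin n × Fin p → ℝ, (ctrbMat A B).mulVec v = y }) ∧
    ({ y : Fin n → ℝ | ∃ v : Fin n × Fin p → ℝ, (ctrbMat A B).mulVec v = y } =
      { y : Fin n → ℝ | ∃ w : Fin n → ℝ, (ctrbGram A B t₁).mulVec w = y }) := by
  have reach_sub_ctrb : ∀ u, Continuous u → ∃ v, ctrbMat A B *ᵥ v = finalState A B t₁ u :=
    fun u hu => exists_mulVec_eq_of_forall_vecMul_eq_zero fun w hw => by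
      simp [dotProduct_finalState A B hu, vecMul_exp_smul_mul_eq_zero A B hw]
  have ctrb_sub_gram : ∀ v, ∃ w, ctrbGram A B t₁ *ᵥ w = ctrbMat A B *ᵥ v :=
    fun v => exists_mulVec_eq_of_forall_vecMul_eq_zero fun w hw => by
      rw [dotProduct_mulVec, vecMul_ctrbMat_eq_zero_of_vecMul_ctrbGram_eq_zero A B ht₁ hw,
        zero_dotProduct]
  have gram_sub_reach : ∀ w, ∃ u, Continuous u ∧ ctrbGram A B t₁ *ᵥ w = finalState A B t₁ u :=
    fun w => ⟨_, continuous_const.matrix_vecMul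
      ((continuous_exp_smul_mul A B).comp (continuous_sub_left t₁)),
      ctrbGram_mulVec_eq_finalState A B t₁ w⟩
  refine ⟨subset_antisymm ?_ ?_, subset_antisymm ?_ ?_⟩
  · rintro _ ⟨u, hu, rfl⟩
    exact reach_sub_ctrb u hu
  · rintro _ ⟨v, rfl⟩
    obtain ⟨w, hw⟩ := ctrb_sub_gram v
    obtain ⟨u, hu, hwu⟩ := gram_sub_reach w
    exact ⟨u, hu, hw ▸ hwu⟩
  · rintro _ ⟨v, rfl⟩
    exact ctrb_sub_gram v
  · rintro _ ⟨w, rfl⟩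
    obtain ⟨u, hu, hwu⟩ := gram_sub_reach w
    obtain ⟨v, hv⟩ := reach_sub_ctrb u hu
    exact ⟨v, hv.trans hwu.symm⟩
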